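/- arXiv:2507.04624 — 4 statements merged into one kernel-verified Lean document; each statement's English description precedes it below -/
import Mathlib

section
/- Let c > 0 and for each real r > 1 let ξ_r ∈ (0,1) satisfy f_r'(ξ_r)ξ_r − f_r(ξ_r) = c, where f_r(s) = s^r/(1-s). Then ξ_r → 1 as r → +∞. Moreover, along any sequence r_n → +∞, f_{r_n}(ξ_{r_n}) → 0 and f_{r_n}'(ξ_{r_n}) → c. -/
/-! The quantity `G_r(x) = f_r'(x)x - f_r(x) = (r-1)x^r/(1-x) + x^{r+1}/(1-x)^2` is increasing
in `x ∈ [0,1)`, and `G_r(b) → 0` as `r → ∞` for each fixed `b < 1`. Hence `G_r(ξ_r) = c > 0`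
forces `ξ_r > b` for large `r`, i.e. `ξ_r → 1`. The first term of `G_r` alone gives
`f_r(ξ_r) ≤ c/(r-1) → 0`, and then `f_r'(ξ_r) = (c + f_r(ξ_r))/ξ_r → c`. -/

open Filter Real Topology

lemma hasDerivAt_rpow_div_one_sub (r : ℝ) {x : ℝ} (hx0 : 0 < x) (hx1 : x ≠ 1) :
    HasDerivAt (fun s : ℝ => s ^ r / (1 - s))
      (r * x ^ (r - 1) / (1 - x) + x ^ r / (1 - x) ^ 2) x := by
  have hne : (1 : ℝ) - x ≠ 0 := sub_ne_zero.2 hx1.symm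
  have hsub : HasDerivAt (fun s : ℝ => 1 - s) (-1) x := (hasDerivAt_id x).const_sub 1
  have hdiv : HasDerivAt (fun s : ℝ => s ^ r / (1 - s))
      ((r * x ^ (r - 1) * (1 - x) - x ^ r * -1) / (1 - x) ^ 2) x :=
    (hasDerivAt_rpow_const (Or.inl hx0.ne')).div hsub hne
  convert hdiv using 1
  field_simp
  ring

/-- `f'(x)x - f(x)` for `f(s) = s^r/(1-s)`: minus the intercept of the tangent to `f` at `x`. -/
noncomputable def tangentGap (r x : ℝ) : ℝ := (r - 1) * x ^ r / (1 - x) + x ^ (r + 1) / (1 - x) ^ 2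

lemma deriv_rpow_div_one_sub_mul_sub (r : ℝ) {x : ℝ} (hx0 : 0 < x) (hx1 : x < 1) :
    deriv (fun s : ℝ => s ^ r / (1 - s)) x * x - x ^ r / (1 - x) = tangentGap r x := by
  have hne : (1 : ℝ) - x ≠ 0 := by linarith
  rw [tangentGap, (hasDerivAt_rpow_div_one_sub r hx0 hx1.ne).deriv, rpow_add_one hx0.ne',
    rpow_sub_one hx0.ne']
  field_simp
  ring

lemma monotoneOn_tangentGap {r : ℝ} (hr : 1 ≤ r) :
    MonotoneOn (tangentGap r) (Set.Ico 0 1) := by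
  rintro x ⟨hx0, -⟩ y ⟨-, hy1⟩ hxy
  have hr0 : 0 ≤ r - 1 := by linarith
  have h1y : 0 < 1 - y := by linarith
  have hy0 : 0 ≤ y := hx0.trans hxy
  unfold tangentGap
  gcongr

lemma tendsto_self_mul_rpow_atTop {b : ℝ} (hb0 : 0 < b) (hb1 : b < 1) :
    Tendsto (fun r : ℝ => r * b ^ r) atTop (𝓝 0) := by
  have hlog : 0 < -log b := neg_pos.2 (log_neg hb0 hb1)
  refine (tendsto_rpow_mul_exp_neg_mul_atTop_nhds_zero 1 _ hlog).congr fun r => ?_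
  rw [rpow_one, neg_neg, rpow_def_of_pos hb0, mul_comm (log b) r]

lemma tendsto_tangentGap_atTop {b : ℝ} (hb0 : 0 < b) (hb1 : b < 1) :
    Tendsto (fun r => tangentGap r b) atTop (𝓝 0) := by
  have hpow := tendsto_rpow_atTop_of_base_lt_one b (by linarith) hb1
  have hlim := (((tendsto_self_mul_rpow_atTop hb0 hb1).sub hpow).div_const (1 - b)).add
    ((hpow.const_mul b).div_const ((1 - b) ^ 2))
  simp only [sub_zero, zero_div, mul_zero, add_zero] at hlim
  refine hlim.congr fun r => ?_
  rw [tangentGap, rpow_add_one hb0.ne']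
  ring

section TangentGapEqConst

variable {c : ℝ} {ξ : ℝ → ℝ} (hmem : ∀ r : ℝ, 1 < r → ξ r ∈ Set.Ioo (0 : ℝ) 1)
  (hgap : ∀ r : ℝ, 1 < r → tangentGap r (ξ r) = c)
include hmem hgap

lemma tendsto_one_of_tangentGap_eq (hc : 0 < c) : Tendsto ξ atTop (𝓝 1) := by
  refine tendsto_order.2 ⟨fun a ha => ?_, fun a ha => ?_⟩
  · set b := max a (1 / 2)
    have hb0 : 0 < b := lt_max_of_lt_right one_half_pos
    have hb1 : b < 1 := max_lt ha one_half_lt_one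
    filter_upwards [(tendsto_tangentGap_atTop hb0 hb1).eventually (eventually_lt_nhds hc),
      eventually_gt_atTop 1] with r hsmall hr
    refine (le_max_left a (1 / 2)).trans_lt (not_le.1 fun hle => ?_)
    have hmono := monotoneOn_tangentGap hr.le ⟨(hmem r hr).1.le, (hmem r hr).2⟩
      ⟨hb0.le, hb1⟩ hle
    simp only [hgap r hr] at hmono
    exact hsmall.not_ge hmono
  · filter_upwards [eventually_gt_atTop 1] with r hr using (hmem r hr).2.trans ha

lemma tendsto_rpow_div_one_sub_of_tangentGap_eq :
    Tendsto (fun r => ξ r ^ r / (1 - ξ r)) atTop (𝓝 0) := by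
  have hbound : ∀ r, 1 < r → ξ r ^ r / (1 - ξ r) ≤ c / (r - 1) := by
    intro r hr
    obtain ⟨hx0, hx1⟩ := hmem r hr
    have hsq : 0 ≤ ξ r ^ (r + 1) / (1 - ξ r) ^ 2 := by
      have := rpow_nonneg hx0.le (r + 1); positivity
    rw [le_div_iff₀ (sub_pos.2 hr), mul_comm, ← mul_div_assoc, ← hgap r hr, tangentGap]
    linarith
  have hlim : Tendsto (fun r : ℝ => c / (r - 1)) atTop (𝓝 0) :=
    tendsto_const_nhds.div_atTop (tendsto_atTop_add_const_right _ (-1) tendsto_id)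
  refine squeeze_zero' ?_ ?_ hlim
  · filter_upwards [eventually_gt_atTop 1] with r hr
    exact div_nonneg (rpow_nonneg (hmem r hr).1.le r) (sub_nonneg.2 (hmem r hr).2.le)
  · filter_upwards [eventually_gt_atTop 1] with r hr using hbound r hr

end TangentGapEqConst

/-- Let `c > 0` and for each `r > 1` let `ξ r ∈ (0,1)` satisfy
`f_r'(ξ_r)·ξ_r − f_r(ξ_r) = c`, where `f_r(s) = s^r/(1-s)`. Then `ξ_r → 1` as
`r → +∞`, and along any sequence `r_n → +∞` (with `r_n > 1`),
`f_{r_n}(ξ_{r_n}) → 0` and `f_{r_n}'(ξ_{r_n}) → c`. -/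
theorem stmt_5 (c : ℝ) (hc : 0 < c) (ξ : ℝ → ℝ)
    (hmem : ∀ r : ℝ, 1 < r → ξ r ∈ Set.Ioo (0:ℝ) 1)
    (heq : ∀ r : ℝ, 1 < r →
      deriv (fun s : ℝ => s ^ r / (1 - s)) (ξ r) * ξ r - (ξ r) ^ r / (1 - ξ r) = c) :
    Filter.Tendsto ξ Filter.atTop (nhds 1) ∧
    ∀ rn : ℕ → ℝ, (∀ n, 1 < rn n) → Filter.Tendsto rn Filter.atTop Filter.atTop →
      Filter.Tendsto (fun n => (ξ (rn n)) ^ (rn n) / (1 - ξ (rn n)))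
        Filter.atTop (nhds 0) ∧
      Filter.Tendsto (fun n => deriv (fun s : ℝ => s ^ (rn n) / (1 - s)) (ξ (rn n)))
        Filter.atTop (nhds c) := by
  have hgap : ∀ r : ℝ, 1 < r → tangentGap r (ξ r) = c := fun r hr =>
    (deriv_rpow_div_one_sub_mul_sub r (hmem r hr).1 (hmem r hr).2).symm.trans (heq r hr)
  have hξ := tendsto_one_of_tangentGap_eq hmem hgap hc
  have hf := tendsto_rpow_div_one_sub_of_tangentGap_eq hmem hgap
  have hderiv : Tendsto (fun r => deriv (fun s : ℝ => s ^ r / (1 - s)) (ξ r)) atTop (𝓝 c) := by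
    have hlim := (tendsto_const_nhds (x := c)).add hf |>.div hξ one_ne_zero
    rw [add_zero, div_one] at hlim
    refine hlim.congr' ?_
    filter_upwards [eventually_gt_atTop 1] with r hr
    rw [Pi.div_apply, ← heq r hr, sub_add_cancel, mul_div_cancel_right₀ _ (hmem r hr).1.ne']
  exact ⟨hξ, fun rn _ hrn => ⟨hf.comp hrn, hderiv.comp hrn⟩⟩
end

section
/- Suppose f : ℝ → ℝ is continuous, f(t)·t ≥ 0 for all t, and the map t ↦ f(t)/|t| is non-decreasing on (−∞,0) ∪ (0,+∞). Then the map t ↦ f(t)·t − 2F(t) is non-decreasing on (0,+∞) and non-increasing on (−∞,0), where F(t) = ∫₀ᵗ f(s) ds. -/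
open intervalIntegral

/-- If `f : ℝ → ℝ` is continuous, `f(t)t ≥ 0` for all `t`, and `t ↦ f(t)/|t|` is
non-decreasing on `(−∞,0)` and on `(0,+∞)`, then `t ↦ f(t)t − 2F(t)` is
non-decreasing on `(0,+∞)` and non-increasing on `(−∞,0)`, where `F(t) = ∫₀ᵗ f`. -/
theorem stmt_6 (f : ℝ → ℝ) (hf : Continuous f)
    (hsign : ∀ t : ℝ, 0 ≤ f t * t)
    (hm1 : MonotoneOn (fun t : ℝ => f t / |t|) (Set.Iio (0:ℝ)))
    (hm2 : MonotoneOn (fun t : ℝ => f t / |t|) (Set.Ioi (0:ℝ))) :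
    MonotoneOn (fun t : ℝ => f t * t - 2 * ∫ s in (0:ℝ)..t, f s) (Set.Ioi (0:ℝ)) ∧
    AntitoneOn (fun t : ℝ => f t * t - 2 * ∫ s in (0:ℝ)..t, f s) (Set.Iio (0:ℝ)) := by
  constructor
  · intro a ha b hb hab
    simp only [Set.mem_Ioi] at ha hb
    have hsplit : (∫ s in (0:ℝ)..b, f s) =
        (∫ s in (0:ℝ)..a, f s) + ∫ s in a..b, f s := by
      rw [intervalIntegral.integral_add_adjacent_intervals
        (hf.intervalIntegrable 0 a) (hf.intervalIntegrable a b)]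
    -- pointwise bound: f s * b ≤ f b * s on [a,b]
    have hpt : ∀ s ∈ Set.Icc a b, f s * b ≤ f b * s := by
      intro s hs
      have hs0 : 0 < s := lt_of_lt_of_le ha hs.1
      have := hm2 (Set.mem_Ioi.2 hs0) (Set.mem_Ioi.2 (ha.trans_le hab)) hs.2
      simp only [abs_of_pos hs0, abs_of_pos (ha.trans_le hab)] at this
      exact (div_le_div_iff₀ hs0 (ha.trans_le hab)).1 this
    have hint : (∫ s in a..b, f s * b) ≤ ∫ s in a..b, f b * s :=
      intervalIntegral.integral_mono_on hab
        ((hf.mul continuous_const).intervalIntegrable a b)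
        ((continuous_const.mul continuous_id).intervalIntegrable a b) hpt
    rw [intervalIntegral.integral_mul_const, intervalIntegral.integral_const_mul,
      integral_id] at hint
    have hfab : f a * b ≤ f b * a := by
      have := hm2 (Set.mem_Ioi.2 ha) (Set.mem_Ioi.2 hb) hab
      simp only [abs_of_pos ha, abs_of_pos hb] at this
      exact (div_le_div_iff₀ ha hb).1 this
    have hfa : f a * b * a ≤ f b * a * a := mul_le_mul_of_nonneg_right hfab ha.le
    simp only [hsplit]
    nlinarith [hint, hfa, ha, hb, mul_pos ha hb]
  · intro a ha b hb hab
    simp only [Set.mem_Iio] at ha hb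
    have hsplit : (∫ s in (0:ℝ)..b, f s) =
        (∫ s in (0:ℝ)..a, f s) + ∫ s in a..b, f s := by
      rw [intervalIntegral.integral_add_adjacent_intervals
        (hf.intervalIntegrable 0 a) (hf.intervalIntegrable a b)]
    have hpt : ∀ s ∈ Set.Icc a b, f a * (-s) ≤ f s * (-a) := by
      intro s hs
      have hs0 : s < 0 := lt_of_le_of_lt hs.2 hb
      have := hm1 (Set.mem_Iio.2 (hab.trans_lt hb)) (Set.mem_Iio.2 hs0) hs.1
      simp only [abs_of_neg hs0, abs_of_neg (hab.trans_lt hb)] at this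
      exact (div_le_div_iff₀ (neg_pos.2 (hab.trans_lt hb)) (neg_pos.2 hs0)).1 this
    have hint : (∫ s in a..b, f a * (-s)) ≤ ∫ s in a..b, f s * (-a) :=
      intervalIntegral.integral_mono_on hab
        ((continuous_const.mul continuous_id.neg).intervalIntegrable a b)
        ((hf.mul continuous_const).intervalIntegrable a b) hpt
    have e1 : (∫ s in a..b, f a * (-s)) = f a * (-((b^2 - a^2)/2)) := by
      rw [intervalIntegral.integral_const_mul, intervalIntegral.integral_neg, integral_id]
    have e2 : (∫ s in a..b, f s * (-a)) = (∫ s in a..b, f s) * (-a) := by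
      rw [intervalIntegral.integral_mul_const]
    rw [e1, e2] at hint
    have hfab : f a * (-b) ≤ f b * (-a) := by
      have := hm1 (Set.mem_Iio.2 ha) (Set.mem_Iio.2 hb) hab
      simp only [abs_of_neg ha, abs_of_neg hb] at this
      exact (div_le_div_iff₀ (neg_pos.2 ha) (neg_pos.2 hb)).1 this
    have hfa : f a * (-b) * (-b) ≤ f b * (-a) * (-b) :=
      mul_le_mul_of_nonneg_right hfab (neg_pos.2 hb).le
    simp only [hsplit]
    nlinarith [hint, hfa, ha, hb]
end

section
/- Under the hypotheses of the cutoff construction (X Banach, U open containing 0, I ∈ C¹(U,ℝ) with I(0) = 0 and I ≤ −1 near each boundary point of U, and J the cutoff functional), the two mountain pass levels agree: c := inf over paths γ ∈ C([0,1], U) with γ(0) = 0 and I(γ(1)) < 0 of max_{t∈[0,1]} I(γ(t)) equals c' := inf over paths γ ∈ C([0,1], X) with γ(0) = 0 and J(γ(1)) < 0 of max_{t∈[0,1]} J(γ(t)), provided c > 0. -/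
open Classical

section helpers
open Set Filter Metric Topology

lemma beta_neg_near_zero {β : ℝ → ℝ} (hβ : ContDiff ℝ (⊤ : ℕ∞) β)
    (hβ2 : ∀ t : ℝ, 0 ≤ t → β t = t) :
    ∃ δ > 0, ∀ t : ℝ, -δ ≤ t → t < 0 → β t < 0 := by
  have hβ0 : β 0 = 0 := hβ2 0 le_rfl
  have h1 : HasDerivAt β (deriv β 0) 0 :=
    ((hβ.differentiable (by norm_num)) 0).hasDerivAt
  have h3 : HasDerivWithinAt id (1:ℝ) (Ici 0) 0 := (hasDerivAt_id (0:ℝ)).hasDerivWithinAt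
  have h4 : HasDerivWithinAt β (1:ℝ) (Ici 0) 0 :=
    h3.congr (fun t ht => hβ2 t ht) (hβ2 0 le_rfl)
  have hud : UniqueDiffWithinAt ℝ (Ici (0:ℝ)) 0 := uniqueDiffOn_Ici 0 0 self_mem_Ici
  have h5 : deriv β 0 = 1 := by
    rw [← h1.hasDerivWithinAt.derivWithin hud, h4.derivWithin hud]
  rw [h5] at h1
  have hslope : Tendsto (slope β 0) (𝓝[≠] 0) (𝓝 1) :=
    hasDerivAt_iff_tendsto_slope.mp h1
  have hev : ∀ᶠ t in 𝓝[≠] (0:ℝ), (1:ℝ)/2 < slope β 0 t :=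
    hslope (Ioi_mem_nhds (by norm_num))
  have hev2 : ∀ᶠ t in 𝓝[<] (0:ℝ), (1:ℝ)/2 < slope β 0 t :=
    hev.filter_mono (nhdsWithin_mono 0 (fun t ht => ne_of_lt ht))
  rw [eventually_nhdsWithin_iff] at hev2
  rw [Metric.eventually_nhds_iff] at hev2
  obtain ⟨ε, hε, hP⟩ := hev2
  refine ⟨ε/2, by positivity, fun t h1t h2t => ?_⟩
  have hd : dist t 0 < ε := by
    rw [Real.dist_eq, sub_zero, abs_of_neg h2t]
    nlinarith
  have := hP hd h2t
  have hslope_eq : slope β 0 t = β t / t := by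
    rw [slope_def_field, hβ0]; ring
  rw [hslope_eq] at this
  have : β t < (1/2) * t := (lt_div_iff_of_neg h2t).mp this
  nlinarith

lemma J_continuous {X : Type*} [NormedAddCommGroup X] [NormedSpace ℝ X]
    (U : Set X) (hU : IsOpen U)
    (I : X → ℝ) (I' : X → X →L[ℝ] ℝ)
    (hI : ∀ u ∈ U, HasFDerivAt I (I' u) u)
    (hbdry : ∀ u ∈ frontier U, ∃ ε > 0, ∀ v ∈ U ∩ Metric.ball u ε, I v ≤ -1)
    (β : ℝ → ℝ) (hβ : ContDiff ℝ (⊤ : ℕ∞) β)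
    (hβ1 : ∀ t : ℝ, t ≤ -1 → β t = -1)
    (J : X → ℝ) (hJ : ∀ u, J u = if u ∈ U then β (I u) else -1) :
    Continuous J := by
  rw [continuous_iff_continuousAt]
  intro u
  by_cases hu : u ∈ U
  · have hevt : ∀ᶠ v in 𝓝 u, (fun v => β (I v)) v = J v := by
      filter_upwards [hU.mem_nhds hu] with v hv
      rw [hJ v, if_pos hv]
    have hca : ContinuousAt (fun v => β (I v)) u :=
      (hβ.continuous.continuousAt).comp (hI u hu).continuousAt
    exact hca.congr hevt
  · by_cases hcl : u ∈ closure U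
    · have hfr : u ∈ frontier U := ⟨hcl, by rwa [hU.interior_eq]⟩
      obtain ⟨ε, hε, hball⟩ := hbdry u hfr
      have hevt : ∀ᶠ v in 𝓝 u, (fun _ => (-1:ℝ)) v = J v := by
        filter_upwards [Metric.ball_mem_nhds u hε] with v hv
        rw [hJ v]
        split_ifs with hvU
        · exact (hβ1 _ (hball v ⟨hvU, hv⟩)).symm
        · rfl
      exact continuousAt_const.congr hevt
    · have hop : IsOpen (closure U)ᶜ := isClosed_closure.isOpen_compl
      have hevt : ∀ᶠ v in 𝓝 u, (fun _ => (-1:ℝ)) v = J v := by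
        filter_upwards [hop.mem_nhds hcl] with v hv
        rw [hJ v, if_neg (fun hvU => hv (subset_closure hvU))]
      exact continuousAt_const.congr hevt

end helpers

/-- Equality of mountain pass levels for the original functional `I` on the open
set `U` and the cutoff functional `J` on all of `X`, provided the level `c` is
positive. -/
theorem stmt_10 {X : Type*} [NormedAddCommGroup X] [NormedSpace ℝ X] [CompleteSpace X]
    (U : Set X) (hU : IsOpen U) (h0 : (0:X) ∈ U) (hbd : (frontier U).Nonempty)
    (I : X → ℝ) (I' : X → X →L[ℝ] ℝ)
    (hI : ∀ u ∈ U, HasFDerivAt I (I' u) u) (hI'c : ContinuousOn I' U)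
    (hI0 : I 0 = 0)
    (hbdry : ∀ u ∈ frontier U, ∃ ε > 0, ∀ v ∈ U ∩ Metric.ball u ε, I v ≤ -1)
    (β : ℝ → ℝ) (hβ : ContDiff ℝ (⊤ : ℕ∞) β)
    (hβ1 : ∀ t : ℝ, t ≤ -1 → β t = -1) (hβ2 : ∀ t : ℝ, 0 ≤ t → β t = t)
    (hβ3 : ∀ t : ℝ, t ≤ 0 → β t ≤ 0)
    (J : X → ℝ) (hJ : ∀ u, J u = if u ∈ U then β (I u) else -1)
    (c c' : ℝ)
    (hc : c = sInf {m : ℝ | ∃ γ : ℝ → X, ContinuousOn γ (Set.Icc 0 1) ∧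
      (∀ t ∈ Set.Icc (0:ℝ) 1, γ t ∈ U) ∧ γ 0 = 0 ∧ I (γ 1) < 0 ∧
      m = sSup ((fun t => I (γ t)) '' Set.Icc (0:ℝ) 1)})
    (hc' : c' = sInf {m : ℝ | ∃ γ : ℝ → X, ContinuousOn γ (Set.Icc 0 1) ∧
      γ 0 = 0 ∧ J (γ 1) < 0 ∧
      m = sSup ((fun t => J (γ t)) '' Set.Icc (0:ℝ) 1)})
    (hcpos : 0 < c) :
    c = c' := by
  set S := {m : ℝ | ∃ γ : ℝ → X, ContinuousOn γ (Set.Icc 0 1) ∧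
      (∀ t ∈ Set.Icc (0:ℝ) 1, γ t ∈ U) ∧ γ 0 = 0 ∧ I (γ 1) < 0 ∧
      m = sSup ((fun t => I (γ t)) '' Set.Icc (0:ℝ) 1)} with hS
  set S' := {m : ℝ | ∃ γ : ℝ → X, ContinuousOn γ (Set.Icc 0 1) ∧
      γ 0 = 0 ∧ J (γ 1) < 0 ∧
      m = sSup ((fun t => J (γ t)) '' Set.Icc (0:ℝ) 1)} with hS'
  have hβ0 : β 0 = 0 := hβ2 0 le_rfl
  have hJzero : J 0 = 0 := by rw [hJ 0, if_pos h0, hI0, hβ0]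
  have hIc : ContinuousOn I U := fun x hx => (hI x hx).continuousAt.continuousWithinAt
  have hJcont : Continuous J := J_continuous U hU I I' hI hbdry β hβ hβ1 J hJ
  obtain ⟨δ, hδpos, hβneg⟩ := beta_neg_near_zero hβ hβ2
  -- every element of S is nonnegative
  have hSlb : ∀ m ∈ S, (0:ℝ) ≤ m := by
    rintro m ⟨γ, hγc, hγU, hγ0, hγI1, rfl⟩
    have hIγc : ContinuousOn (fun t => I (γ t)) (Set.Icc 0 1) :=
      hIc.comp hγc (fun t ht => hγU t ht)
    have hbddI : BddAbove ((fun t => I (γ t)) '' Set.Icc (0:ℝ) 1) :=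
      (isCompact_Icc.image_of_continuousOn hIγc).bddAbove
    have h0mem : (0:ℝ) ∈ (fun t => I (γ t)) '' Set.Icc (0:ℝ) 1 :=
      ⟨0, ⟨le_rfl, zero_le_one⟩, by simp [hγ0, hI0]⟩
    exact le_csSup hbddI h0mem
  have hSbdd : BddBelow S := ⟨0, hSlb⟩
  -- S is nonempty
  have hS_ne : S.Nonempty := by
    by_contra h
    rw [Set.not_nonempty_iff_eq_empty] at h
    rw [hc, h, Real.sInf_empty] at hcpos
    exact lt_irrefl 0 hcpos
  -- Claim 1 : c is a lower bound for S'
  have claim1 : ∀ m' ∈ S', c ≤ m' := by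
    rintro m' ⟨γ', hγc, hγ0, hγJ1, rfl⟩
    have hJγc : ContinuousOn (fun t => J (γ' t)) (Set.Icc 0 1) :=
      hJcont.comp_continuousOn hγc
    have hbddJ : BddAbove ((fun t => J (γ' t)) '' Set.Icc (0:ℝ) 1) :=
      (isCompact_Icc.image_of_continuousOn hJγc).bddAbove
    have h0memJ : (0:ℝ) ∈ (fun t => J (γ' t)) '' Set.Icc (0:ℝ) 1 :=
      ⟨0, ⟨le_rfl, zero_le_one⟩, by simp [hγ0, hJzero]⟩
    have hm'0 : (0:ℝ) ≤ sSup ((fun t => J (γ' t)) '' Set.Icc (0:ℝ) 1) :=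
      le_csSup hbddJ h0memJ
    have key : ∀ σ ∈ Set.Icc (0:ℝ) 1, (∀ t ∈ Set.Icc (0:ℝ) 1, γ' (σ * t) ∈ U) →
        I (γ' (σ * 1)) < 0 →
        c ≤ sSup ((fun t => J (γ' t)) '' Set.Icc (0:ℝ) 1) := by
      intro σ hσ hσU hσI
      have hmul : ∀ t ∈ Set.Icc (0:ℝ) 1, σ * t ∈ Set.Icc (0:ℝ) 1 := fun t ht =>
        ⟨mul_nonneg hσ.1 ht.1, le_trans (mul_le_mul hσ.2 ht.2 ht.1 zero_le_one) (by norm_num)⟩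
      have hgamc : ContinuousOn (fun t => γ' (σ * t)) (Set.Icc 0 1) :=
        hγc.comp ((continuous_const.mul continuous_id).continuousOn) hmul
      have hmtS : sSup ((fun t => I (γ' (σ * t))) '' Set.Icc (0:ℝ) 1) ∈ S := by
        refine ⟨fun t => γ' (σ * t), hgamc, hσU, by simp [hγ0], hσI, rfl⟩
      have h1 : c ≤ sSup ((fun t => I (γ' (σ * t))) '' Set.Icc (0:ℝ) 1) := by
        rw [hc]; exact csInf_le hSbdd hmtS
      have h2 : sSup ((fun t => I (γ' (σ * t))) '' Set.Icc (0:ℝ) 1) ≤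
          sSup ((fun t => J (γ' t)) '' Set.Icc (0:ℝ) 1) := by
        apply csSup_le ((Set.nonempty_Icc.mpr zero_le_one).image _)
        rintro x ⟨t, ht, rfl⟩
        show I (γ' (σ * t)) ≤ _
        by_cases hpos : 0 ≤ I (γ' (σ * t))
        · have heq : I (γ' (σ * t)) = J (γ' (σ * t)) := by
            rw [hJ, if_pos (hσU t ht), hβ2 _ hpos]
          rw [heq]
          exact le_csSup hbddJ ⟨σ * t, hmul t ht, rfl⟩
        · push_neg at hpos
          linarith
      linarith
    by_cases hall : ∀ t ∈ Set.Icc (0:ℝ) 1, γ' t ∈ U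
    · have h1U : γ' 1 ∈ U := hall 1 ⟨zero_le_one, le_rfl⟩
      have hI1 : I (γ' 1) < 0 := by
        by_contra hge
        push_neg at hge
        rw [hJ, if_pos h1U, hβ2 _ hge] at hγJ1
        linarith
      exact key 1 ⟨zero_le_one, le_rfl⟩
        (fun t ht => by rw [one_mul]; exact hall t ht) (by rw [one_mul]; exact hI1)
    · push_neg at hall
      set T := {t : ℝ | t ∈ Set.Icc (0:ℝ) 1 ∧ γ' t ∉ U} with hT
      have hTne : T.Nonempty := by
        obtain ⟨t, ht, htU⟩ := hall
        exact ⟨t, ht, htU⟩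
      have hTbdd : BddBelow T := ⟨0, fun t ht => ht.1.1⟩
      set s := sInf T with hs
      have hs0 : 0 ≤ s := le_csInf hTne (fun t ht => ht.1.1)
      have hs1 : s ≤ 1 := by
        obtain ⟨t, ht⟩ := hTne
        exact (csInf_le hTbdd ht).trans ht.1.2
      have hsIcc : s ∈ Set.Icc (0:ℝ) 1 := ⟨hs0, hs1⟩
      have hpre : ∀ t, 0 ≤ t → t < s → γ' t ∈ U := by
        intro t h0t hts
        by_contra htU
        have : s ≤ t := csInf_le hTbdd ⟨⟨h0t, hts.le.trans hs1⟩, htU⟩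
        linarith
      have hsU : γ' s ∉ U := by
        intro hsU
        have hmem : γ' ⁻¹' U ∈ nhdsWithin s (Set.Icc (0:ℝ) 1) :=
          (hγc s hsIcc) (hU.mem_nhds hsU)
        rw [Metric.mem_nhdsWithin_iff] at hmem
        obtain ⟨η, hη, hsub⟩ := hmem
        obtain ⟨t, htT, htlt⟩ := Real.lt_sInf_add_pos hTne hη
        have hts : s ≤ t := csInf_le hTbdd htT
        have hball : t ∈ Metric.ball s η := by
          rw [Metric.mem_ball, Real.dist_eq, abs_of_nonneg (by linarith)]
          linarith
        exact htT.2 (hsub ⟨hball, htT.1⟩)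
      have hspos : 0 < s := by
        rcases eq_or_lt_of_le hs0 with h | h
        · exfalso; apply hsU; rw [← h, hγ0]; exact h0
        · exact h
      -- pick points just before s, inside any neighborhood of γ' s
      have hnear : ∀ V ∈ nhds (γ' s), ∃ t, 0 ≤ t ∧ t < s ∧ t ∈ Set.Icc (0:ℝ) 1 ∧ γ' t ∈ V := by
        intro V hV
        have hmem : γ' ⁻¹' V ∈ nhdsWithin s (Set.Icc (0:ℝ) 1) := (hγc s hsIcc) hV
        rw [Metric.mem_nhdsWithin_iff] at hmem
        obtain ⟨η, hη, hsub⟩ := hmem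
        refine ⟨s - min s η / 2, ?_, ?_, ?_, ?_⟩
        · have : min s η ≤ s := min_le_left _ _
          linarith
        · have : 0 < min s η := lt_min hspos hη
          linarith
        · constructor
          · have : min s η ≤ s := min_le_left _ _
            linarith
          · have : 0 < min s η := lt_min hspos hη
            linarith
        · apply hsub
          constructor
          · rw [Metric.mem_ball, Real.dist_eq]
            have h1 : 0 < min s η := lt_min hspos hη
            have h2 : min s η ≤ η := min_le_right _ _
            rw [abs_of_nonpos (by linarith)]
            linarith
          · constructor
            · have : min s η ≤ s := min_le_left _ _
              linarith
            · have : 0 < min s η := lt_min hspos hη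
              linarith
      have hfr : γ' s ∈ frontier U := by
        constructor
        · rw [mem_closure_iff_nhds]
          intro V hV
          obtain ⟨t, h0t, hts, _, hV'⟩ := hnear V hV
          exact ⟨γ' t, hV', hpre t h0t hts⟩
        · rwa [hU.interior_eq]
      obtain ⟨ε, hε, hballI⟩ := hbdry _ hfr
      obtain ⟨t₀, h0t₀, ht₀s, ht₀Icc, ht₀ball⟩ :=
        hnear (Metric.ball (γ' s) ε) (Metric.ball_mem_nhds _ hε)
      have ht₀U : γ' t₀ ∈ U := hpre t₀ h0t₀ ht₀s
      have hIt₀ : I (γ' t₀) ≤ -1 := hballI _ ⟨ht₀U, ht₀ball⟩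
      refine key t₀ ht₀Icc ?_ ?_
      · intro t ht
        apply hpre _ (mul_nonneg h0t₀ ht.1)
        calc t₀ * t ≤ t₀ * 1 := mul_le_mul_of_nonneg_left ht.2 h0t₀
        _ = t₀ := mul_one _
        _ < s := ht₀s
      · rw [mul_one]; linarith
  -- Claim 2 : every element of S is ≥ some element of S'
  have claim2 : ∀ m ∈ S, ∃ m' ∈ S', m' ≤ m := by
    rintro m ⟨γ, hγc, hγU, hγ0, hγI1, rfl⟩
    have hIγc : ContinuousOn (fun t => I (γ t)) (Set.Icc 0 1) :=
      hIc.comp hγc (fun t ht => hγU t ht)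
    have hbddI : BddAbove ((fun t => I (γ t)) '' Set.Icc (0:ℝ) 1) :=
      (isCompact_Icc.image_of_continuousOn hIγc).bddAbove
    have h0mem : (0:ℝ) ∈ (fun t => I (γ t)) '' Set.Icc (0:ℝ) 1 :=
      ⟨0, ⟨le_rfl, zero_le_one⟩, by simp [hγ0, hI0]⟩
    have hm0 : (0:ℝ) ≤ sSup ((fun t => I (γ t)) '' Set.Icc (0:ℝ) 1) :=
      le_csSup hbddI h0mem
    have key2 : ∀ s ∈ Set.Icc (0:ℝ) 1, J (γ (s * 1)) < 0 →
        ∃ m' ∈ S', m' ≤ sSup ((fun t => I (γ t)) '' Set.Icc (0:ℝ) 1) := by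
      intro s hsIcc hJs
      have hmul : ∀ t ∈ Set.Icc (0:ℝ) 1, s * t ∈ Set.Icc (0:ℝ) 1 := fun t ht =>
        ⟨mul_nonneg hsIcc.1 ht.1,
          le_trans (mul_le_mul hsIcc.2 ht.2 ht.1 zero_le_one) (by norm_num)⟩
      have hgamc : ContinuousOn (fun t => γ (s * t)) (Set.Icc 0 1) :=
        hγc.comp ((continuous_const.mul continuous_id).continuousOn) hmul
      refine ⟨sSup ((fun t => J (γ (s * t))) '' Set.Icc (0:ℝ) 1),
        ⟨fun t => γ (s * t), hgamc, by simp [hγ0], hJs, rfl⟩, ?_⟩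
      apply csSup_le ((Set.nonempty_Icc.mpr zero_le_one).image _)
      rintro x ⟨t, ht, rfl⟩
      have hin : γ (s * t) ∈ U := hγU _ (hmul t ht)
      show J (γ (s * t)) ≤ _
      rw [hJ, if_pos hin]
      by_cases hpos : 0 ≤ I (γ (s * t))
      · rw [hβ2 _ hpos]
        exact le_csSup hbddI ⟨s * t, hmul t ht, rfl⟩
      · push_neg at hpos
        have := hβ3 _ hpos.le
        linarith
    by_cases hend : β (I (γ 1)) < 0
    · apply key2 1 ⟨zero_le_one, le_rfl⟩
      rw [mul_one, hJ, if_pos (hγU 1 ⟨zero_le_one, le_rfl⟩)]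
      exact hend
    · push_neg at hend
      have hI1δ : I (γ 1) < -δ := by
        by_contra hge
        push_neg at hge
        exact absurd (hβneg _ hge hγI1) (not_lt.mpr hend)
      have hIVT := intermediate_value_Icc' (zero_le_one (α := ℝ)) hIγc
      have hmemIcc : (-δ/2) ∈ Set.Icc ((fun t => I (γ t)) 1) ((fun t => I (γ t)) 0) := by
        simp only [hγ0, hI0]
        constructor <;> [linarith; linarith]
      obtain ⟨σ, hσIcc, hσeq⟩ := hIVT hmemIcc
      apply key2 σ hσIcc
      rw [mul_one, hJ, if_pos (hγU σ hσIcc)]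
      simp only at hσeq
      rw [hσeq]
      exact hβneg _ (by linarith) (by linarith)
  have hS'ne : S'.Nonempty := by
    obtain ⟨m, hm⟩ := hS_ne
    obtain ⟨m', hm', _⟩ := claim2 m hm
    exact ⟨m', hm'⟩
  have hS'bdd : BddBelow S' := ⟨c, claim1⟩
  have hle1 : c ≤ c' := by
    rw [hc']; exact le_csInf hS'ne claim1
  have hle2 : c' ≤ c := by
    rw [hc]
    apply le_csInf hS_ne
    intro m hm
    obtain ⟨m', hm'S, hle⟩ := claim2 m hm
    calc c' = sInf S' := hc'
    _ ≤ m' := csInf_le hS'bdd hm'S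
    _ ≤ m := hle
  linarith
end

section
/- Let q > 2, M > 0, and let E(u) = ½‖u‖² − ∫_Ω F(u)dx − ∫_{∂Ω} G(u)dσ on H¹(Ω) with norm ‖u‖² = ∫_Ω|∇u|² + ∫_{∂Ω}|u|²dσ, where 0 ≤ qF(t) ≤ f(t)t and 0 ≤ qG(t) ≤ g(t)t. Suppose u ∈ H¹(Ω) satisfies ⟨E'(u), u⟩ = 0, E(u) ≤ Mμ, 1/λ̂ ‖u‖² ≥ ‖u‖₂², 1/λ̃ ‖u‖² ≥ ‖u‖²_{L²(∂Ω)}, |f(t)| ≤ K₂|t| + K_p|t|^{p−1}, |g(t)| ≤ K₂ᵍ|t| + K_l|t|^{l−1}, ‖u‖_p^p ≤ C_p‖u‖^p, ‖u‖_{L^l(∂Ω)}^l ≤ C_l'‖u‖^l, with p, l > 2, λ̂, λ̃ > 0, K₂/λ̂ + K₂ᵍ/λ̃ < 1. Then if u ≠ 0, 1 − K₂/λ̂ − K₂ᵍ/λ̃ ≤ K_p C_p (2qMμ/(q−2))^{(p−2)/2} + K_l C_l' (2qMμ/(q−2))^{(l−2)/2}. In particular for μ small enough no such nonzero u exists. 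-/
/-!
Testing the critical point identity against the energy bound, the Ambrosetti–Rabinowitz
conditions `qF ≤ f t`, `qG ≤ g t` give `(q - 2)/2 · ‖u‖² ≤ q E(u) ≤ q M μ`, so `‖u‖²` is at most
`B = 2qMμ/(q - 2)`. Feeding the growth bounds, the eigenvalue inequalities and the embedding
inequalities into `‖u‖² = ∫ f(u)u + ∫ g(u)u` and dividing by `‖u‖² > 0` leaves
`1 - K₂/λ̂ - K₂ᵍ/λ̃ ≤ K_p C_p ‖u‖^{p-2} + K_l C_l ‖u‖^{l-2}`, and `‖u‖^{r-2} ≤ B^{(r-2)/2}`.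
The right-hand side tends to `0` with `μ`, while the left-hand side is positive.
-/

open Filter Topology

lemma sq_le_of_energy_le_of_critical {q x a b F G c : ℝ} (hq : 2 < q)
    (hcrit : x ^ 2 = a + b) (hF : q * F ≤ a) (hG : q * G ≤ b)
    (hE : x ^ 2 / 2 - F - G ≤ c) : x ^ 2 ≤ 2 * q * c / (q - 2) := by
  rw [le_div_iff₀ (by linarith)]
  nlinarith

lemma mul_le_div_mul_of_mul_le {K lam s y : ℝ} (hK : 0 ≤ K) (hlam : 0 < lam)
    (h : lam * s ≤ y) : K * s ≤ K / lam * y := by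
  rw [div_mul_eq_mul_div, le_div_iff₀ hlam, mul_assoc]
  exact mul_le_mul_of_nonneg_left (by linarith) hK

lemma one_sub_le_of_sq_le_add_rpow {x c A B p l : ℝ} (hx : 0 < x)
    (h : x ^ 2 ≤ c * x ^ 2 + A * x ^ p + B * x ^ l) :
    1 - c ≤ A * x ^ (p - 2) + B * x ^ (l - 2) := by
  have hsplit (r : ℝ) : x ^ r = x ^ (r - 2) * x ^ 2 := by
    rw [← Real.rpow_add_natCast hx.ne']
    norm_num
  rw [hsplit p, hsplit l] at h
  nlinarith [pow_pos hx 2]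

lemma rpow_sub_two_le_of_sq_le {x B p : ℝ} (hx : 0 ≤ x) (hp : 2 ≤ p) (h : x ^ 2 ≤ B) :
    x ^ (p - 2) ≤ B ^ ((p - 2) / 2) := by
  calc x ^ (p - 2) = (x ^ 2) ^ ((p - 2) / 2) := by
        rw [← Real.rpow_natCast x 2, ← Real.rpow_mul hx]
        congr 1
        push_cast
        ring
    _ ≤ B ^ ((p - 2) / 2) := by gcongr

lemma tendsto_mul_div_rpow_nhds_zero {a : ℝ} (ha : 0 < a) (c d : ℝ) :
    Tendsto (fun t : ℝ => (c * t / d) ^ a) (𝓝 0) (𝓝 0) := by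
  have hcont : Continuous fun t : ℝ => (c * t / d) ^ a :=
    ((continuous_const.mul continuous_id).div_const d).rpow_const fun _ => Or.inr ha.le
  simpa [Real.zero_rpow ha.ne'] using hcont.tendsto 0

theorem stmt_19_general (q M μ lamhat lamtil K₂ K₂g Kp Kl Cp Cl p l : ℝ)
    (nu l2sq bdsq intfu intgu intF intG lp ll : ℝ)
    (hq : 2 < q)
    (hlamhat : 0 < lamhat) (hlamtil : 0 < lamtil)
    (hp : 2 < p) (hl : 2 < l)
    (hK2 : 0 ≤ K₂) (hK2g : 0 ≤ K₂g) (hKp : 0 ≤ Kp) (hKl : 0 ≤ Kl)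
    (hCp : 0 ≤ Cp) (hCl : 0 ≤ Cl)
    (hsmall : K₂ / lamhat + K₂g / lamtil < 1)
    (heig1 : lamhat * l2sq ≤ nu ^ 2)
    (heig2 : lamtil * bdsq ≤ nu ^ 2)
    (hcrit : nu ^ 2 = intfu + intgu)
    (hE : nu ^ 2 / 2 - intF - intG ≤ M * μ)
    (hARF : q * intF ≤ intfu)
    (hARG : q * intG ≤ intgu)
    (hfb : intfu ≤ K₂ * l2sq + Kp * lp)
    (hgb : intgu ≤ K₂g * bdsq + Kl * ll)
    (hGNp : lp ≤ Cp * nu ^ p)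
    (hGNl : ll ≤ Cl * nu ^ l) :
    (0 < nu →
      1 - K₂ / lamhat - K₂g / lamtil ≤
        Kp * Cp * (2 * q * M * μ / (q - 2)) ^ ((p - 2) / 2)
        + Kl * Cl * (2 * q * M * μ / (q - 2)) ^ ((l - 2) / 2)) ∧
    (∃ μ₀ > (0:ℝ), ∀ μ' : ℝ, 0 < μ' → μ' < μ₀ →
      ¬ (1 - K₂ / lamhat - K₂g / lamtil ≤
        Kp * Cp * (2 * q * M * μ' / (q - 2)) ^ ((p - 2) / 2)
        + Kl * Cl * (2 * q * M * μ' / (q - 2)) ^ ((l - 2) / 2))) := by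
  refine ⟨fun hnu => ?_, ?_⟩
  · have hB : nu ^ 2 ≤ 2 * q * M * μ / (q - 2) :=
      (sq_le_of_energy_le_of_critical hq hcrit hARF hARG hE).trans_eq (by ring)
    have hinterior := mul_le_div_mul_of_mul_le hK2 hlamhat heig1
    have hboundary := mul_le_div_mul_of_mul_le hK2g hlamtil heig2
    have hKpCp := mul_le_mul_of_nonneg_left hGNp hKp
    have hKlCl := mul_le_mul_of_nonneg_left hGNl hKl
    have hdiv := one_sub_le_of_sq_le_add_rpow (c := K₂ / lamhat + K₂g / lamtil)
      (A := Kp * Cp) (B := Kl * Cl) (p := p) (l := l) hnu (by linarith)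
    calc 1 - K₂ / lamhat - K₂g / lamtil
        ≤ Kp * Cp * nu ^ (p - 2) + Kl * Cl * nu ^ (l - 2) := by linarith
      _ ≤ _ := by
        gcongr
        · exact rpow_sub_two_le_of_sq_le hnu.le hp.le hB
        · exact rpow_sub_two_le_of_sq_le hnu.le hl.le hB
  · have hlim : Tendsto (fun t => Kp * Cp * (2 * q * M * t / (q - 2)) ^ ((p - 2) / 2)
        + Kl * Cl * (2 * q * M * t / (q - 2)) ^ ((l - 2) / 2)) (𝓝 0) (𝓝 0) := by
      simpa using
        ((tendsto_mul_div_rpow_nhds_zero (by linarith) _ _).const_mul (Kp * Cp)).add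
          ((tendsto_mul_div_rpow_nhds_zero (by linarith) _ _).const_mul (Kl * Cl))
    have hgap : 0 < 1 - K₂ / lamhat - K₂g / lamtil := by linarith
    obtain ⟨δ, hδ, hsmall_near⟩ :=
      Metric.eventually_nhds_iff.mp (hlim.eventually (gt_mem_nhds hgap))
    refine ⟨δ, hδ, fun μ' hμ' hμ'δ => not_le.mpr (hsmall_near ?_)⟩
    rwa [Real.dist_0_eq_abs, abs_of_pos hμ']

/-- Non-existence lemma for the Robin-type problem. Here `nu = ‖u‖` denotes the
`H¹(Ω)`-norm (with boundary term), `l2sq = ‖u‖₂²`, `bdsq = ‖u‖²_{L²(∂Ω)}`,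
`intfu = ∫_Ω f(u)u`, `intgu = ∫_{∂Ω} g(u)u`, `intF = ∫_Ω F(u)`,
`intG = ∫_{∂Ω} G(u)`, `lp = ‖u‖_p^p`, `ll = ‖u‖_{L^l(∂Ω)}^l`. Under the
eigenvalue inequalities, the growth/embedding bounds, the AR conditions, the
critical point identity `⟨E'(u),u⟩ = 0` and the energy bound `E(u) ≤ Mμ`:
if `u ≠ 0` then `1 − K₂/λ̂ − K₂ᵍ/λ̃ ≤ K_p C_p (2qMμ/(q−2))^{(p−2)/2}
+ K_l C_l' (2qMμ/(q−2))^{(l−2)/2}`; and for `μ` small enough this inequality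
fails, so no such nonzero `u` exists. -/
theorem stmt_19 (q M μ lamhat lamtil K₂ K₂g Kp Kl Cp Cl p l : ℝ)
    (nu l2sq bdsq intfu intgu intF intG lp ll : ℝ)
    (hq : 2 < q) (hM : 0 < M) (hμ : 0 < μ)
    (hlamhat : 0 < lamhat) (hlamtil : 0 < lamtil)
    (hp : 2 < p) (hl : 2 < l)
    (hK2 : 0 ≤ K₂) (hK2g : 0 ≤ K₂g) (hKp : 0 ≤ Kp) (hKl : 0 ≤ Kl)
    (hCp : 0 ≤ Cp) (hCl : 0 ≤ Cl)
    (hsmall : K₂ / lamhat + K₂g / lamtil < 1)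
    (hnu : 0 ≤ nu) (hl2 : 0 ≤ l2sq) (hbd : 0 ≤ bdsq)
    (heig1 : lamhat * l2sq ≤ nu ^ 2)
    (heig2 : lamtil * bdsq ≤ nu ^ 2)
    (hcrit : nu ^ 2 = intfu + intgu)
    (hE : nu ^ 2 / 2 - intF - intG ≤ M * μ)
    (hARF0 : 0 ≤ q * intF) (hARF : q * intF ≤ intfu)
    (hARG0 : 0 ≤ q * intG) (hARG : q * intG ≤ intgu)
    (hfb : intfu ≤ K₂ * l2sq + Kp * lp)
    (hgb : intgu ≤ K₂g * bdsq + Kl * ll)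
    (hGNp : lp ≤ Cp * nu ^ p)
    (hGNl : ll ≤ Cl * nu ^ l) :
    (0 < nu →
      1 - K₂ / lamhat - K₂g / lamtil ≤
        Kp * Cp * (2 * q * M * μ / (q - 2)) ^ ((p - 2) / 2)
        + Kl * Cl * (2 * q * M * μ / (q - 2)) ^ ((l - 2) / 2)) ∧
    (∃ μ₀ > (0:ℝ), ∀ μ' : ℝ, 0 < μ' → μ' < μ₀ →
      ¬ (1 - K₂ / lamhat - K₂g / lamtil ≤
        Kp * Cp * (2 * q * M * μ' / (q - 2)) ^ ((p - 2) / 2)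
        + Kl * Cl * (2 * q * M * μ' / (q - 2)) ^ ((l - 2) / 2))) :=
  stmt_19_general q M μ lamhat lamtil K₂ K₂g Kp Kl Cp Cl p l nu l2sq bdsq intfu intgu intF intG lp
    ll hq hlamhat hlamtil hp hl hK2 hK2g hKp hKl hCp hCl hsmall heig1 heig2 hcrit hE hARF hARG hfb
    hgb hGNp hGNl
end
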